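/- If a normal modal logic L has the Craig interpolation property for both propositional variables and agents, then its global consequence relation has the following restricted deductive interpolation property: whenever φ ⊢_L ψ, there exists δ with φ ⊢_L δ, δ ⊢_L ψ, Prop(δ) ⊆ Prop(φ) ∩ Prop(ψ), and Ag(δ) ⊆ Ag(ψ). -/
import Mathlib


inductive Fm (A : Type) : Type
  | bot | top
  | pos (p : ℕ)
  | neg (p : ℕ)
  | and (φ ψ : Fm A)
  | or (φ ψ : Fm A)
  | box (a : A) (φ : Fm A)
  | dia (a : A) (φ : Fm A)

namespace Fm

/-- De Morgan negation on NNF formulas. -/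
def negf {A : Type} : Fm A → Fm A
  | bot => top
  | top => bot
  | pos p => neg p
  | neg p => pos p
  | and φ ψ => or (negf φ) (negf ψ)
  | or φ ψ => and (negf φ) (negf ψ)
  | box a φ => dia a (negf φ)
  | dia a φ => box a (negf φ)

/-- Implication φ → ψ := ¬φ ∨ ψ. -/
def impf {A : Type} (φ ψ : Fm A) : Fm A := or (negf φ) ψ

/-- Positively occurring variables. -/
def varP {A : Type} : Fm A → Set ℕ
  | pos p => {p}
  | neg _ => ∅
  | bot => ∅
  | top => ∅
  | and φ ψ => varP φ ∪ varP ψ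
  | or φ ψ => varP φ ∪ varP ψ
  | box _ φ => varP φ
  | dia _ φ => varP φ

/-- Negatively occurring variables. -/
def varN {A : Type} : Fm A → Set ℕ
  | pos _ => ∅
  | neg p => {p}
  | bot => ∅
  | top => ∅
  | and φ ψ => varN φ ∪ varN ψ
  | or φ ψ => varN φ ∪ varN ψ
  | box _ φ => varN φ
  | dia _ φ => varN φ

/-- All variables. -/
def vars {A : Type} (φ : Fm A) : Set ℕ := varP φ ∪ varN φ

/-- Agents occurring in a formula. -/
def agents {A : Type} : Fm A → Set A
  | bot => ∅
  | top => ∅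
  | pos _ => ∅
  | neg _ => ∅
  | and φ ψ => agents φ ∪ agents ψ
  | or φ ψ => agents φ ∪ agents ψ
  | box a φ => {a} ∪ agents φ
  | dia a φ => {a} ∪ agents φ

/-- Modal depth. -/
def fd {A : Type} : Fm A → ℕ
  | bot => 0
  | top => 0
  | pos _ => 0
  | neg _ => 0
  | and φ ψ => max (fd φ) (fd ψ)
  | or φ ψ => max (fd φ) (fd ψ)
  | box _ φ => fd φ + 1
  | dia _ φ => fd φ + 1

/-- Size of a formula. -/
def size {A : Type} : Fm A → ℕ
  | bot => 1
  | top => 1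
  | pos _ => 1
  | neg _ => 1
  | and φ ψ => size φ + size ψ + 1
  | or φ ψ => size φ + size ψ + 1
  | box _ φ => size φ + 1
  | dia _ φ => size φ + 1

end Fm

/-- Multi-agent Kripke model over worlds `W` and agents `A`. -/
structure KModel (A W : Type) where
  R : A → W → W → Prop
  V : ℕ → Set W

/-- Truth of an NNF formula at a world. -/
def Sat {A W : Type} (M : KModel A W) : W → Fm A → Prop
  | _, .bot => False
  | _, .top => True
  | w, .pos p => w ∈ M.V p
  | w, .neg p => w ∉ M.V p
  | w, .and φ ψ => Sat M w φ ∧ Sat M w ψ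
  | w, .or φ ψ => Sat M w φ ∨ Sat M w ψ
  | w, .box a φ => ∀ v, M.R a w v → Sat M v φ
  | w, .dia a φ => ∃ v, M.R a w v ∧ Sat M v φ

/-- S5ₙ-validity: truth in all worlds of all models with equivalence relations. -/
def ValidS5 {A : Type} (φ : Fm A) : Prop :=
  ∀ (W : Type) (M : KModel A W), Nonempty W →
    (∀ a, Equivalence (M.R a)) → ∀ w, Sat M w φ

/-- Formula interpretation of a sequent given as a list: the disjunction. -/
def iotas {A : Type} (l : List (Fm A)) : Fm A := l.foldr .or .bot


/-- Validity in all Kripke models (no frame conditions). -/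
def KValid {A : Type} (φ : Fm A) : Prop :=
  ∀ (W : Type) (M : KModel A W) (w : W), Sat M w φ

/-- A normal modal logic: contains all K-valid formulas (in particular all
classical tautologies and distribution axioms) and is closed under modus
ponens and necessitation. -/
def NormalLogic {A : Type} (L : Fm A → Prop) : Prop :=
  (∀ φ, KValid φ → L φ) ∧
  (∀ φ ψ, L (Fm.impf φ ψ) → L φ → L ψ) ∧
  (∀ (a : A) (φ), L φ → L (.box a φ))

/-- Global consequence: derivable from L-theorems and Γ using modus ponens and
necessitation applied to derived formulas. -/
inductive GCons {A : Type} (L : Fm A → Prop) (Γ : Set (Fm A)) : Fm A → Prop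
  | thm {φ} : L φ → GCons L Γ φ
  | hyp {φ} : φ ∈ Γ → GCons L Γ φ
  | mp {φ ψ} : GCons L Γ (Fm.impf φ ψ) → GCons L Γ φ → GCons L Γ ψ
  | nec {a φ} : GCons L Γ φ → GCons L Γ (.box a φ)

/-- A block: a word over the box modalities, applied to a formula. -/
def applyBlock {A : Type} (B : List A) (φ : Fm A) : Fm A := B.foldr .box φ

/-- The conjunction φ ∧ B₁φ ∧ … ∧ B_mφ. -/
def blockConj {A : Type} (Bs : List (List A)) (φ : Fm A) : Fm A :=
  Bs.foldr (fun B acc => .and (applyBlock B φ) acc) φ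

lemma varP_applyBlock {A : Type} (B : List A) (φ : Fm A) :
    Fm.varP (applyBlock B φ) = Fm.varP φ := by
  induction B with
  | nil => rfl
  | cons a B ih => simp [applyBlock, Fm.varP] at *; exact ih

lemma varN_applyBlock {A : Type} (B : List A) (φ : Fm A) :
    Fm.varN (applyBlock B φ) = Fm.varN φ := by
  induction B with
  | nil => rfl
  | cons a B ih => simp [applyBlock, Fm.varN] at *; exact ih

lemma varP_blockConj {A : Type} (Bs : List (List A)) (φ : Fm A) :
    Fm.varP (blockConj Bs φ) = Fm.varP φ := by
  induction Bs with
  | nil => rfl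
  | cons B Bs ih =>
      simp [blockConj, Fm.varP] at *
      rw [ih, varP_applyBlock, Set.union_self]

lemma varN_blockConj {A : Type} (Bs : List (List A)) (φ : Fm A) :
    Fm.varN (blockConj Bs φ) = Fm.varN φ := by
  induction Bs with
  | nil => rfl
  | cons B Bs ih =>
      simp [blockConj, Fm.varN] at *
      rw [ih, varN_applyBlock, Set.union_self]

lemma vars_blockConj {A : Type} (Bs : List (List A)) (φ : Fm A) :
    Fm.vars (blockConj Bs φ) = Fm.vars φ := by
  simp [Fm.vars, varP_blockConj, varN_blockConj]

lemma GCons_weaken {A : Type} {L : Fm A → Prop} (Γ : Set (Fm A)) {α : Fm A}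
    (g : GCons L (∅ : Set (Fm A)) α) : GCons L Γ α := by
  induction g with
  | thm h => exact GCons.thm h
  | hyp h => exact absurd h (Set.notMem_empty _)
  | mp _ _ ih1 ih2 => exact GCons.mp ih1 ih2
  | nec _ ih => exact GCons.nec ih

/-- CIP for atoms and agents implies a restricted deductive interpolation
property for the global consequence relation. -/
theorem stmt14 {A : Type} (L : Fm A → Prop)
    (hDDT : ∀ φ ψ : Fm A, GCons L {φ} ψ ↔
      ∃ Bs : List (List A), GCons L ∅ (Fm.impf (blockConj Bs φ) ψ))
    (hCIP : ∀ α β : Fm A, GCons L ∅ (Fm.impf α β) →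
      ∃ δ, GCons L ∅ (Fm.impf α δ) ∧ GCons L ∅ (Fm.impf δ β) ∧
        Fm.vars δ ⊆ Fm.vars α ∩ Fm.vars β ∧
        Fm.agents δ ⊆ Fm.agents α ∩ Fm.agents β)
    (φ ψ : Fm A) (h : GCons L {φ} ψ) :
    ∃ δ : Fm A, GCons L {φ} δ ∧ GCons L {δ} ψ ∧
      Fm.vars δ ⊆ Fm.vars φ ∩ Fm.vars ψ ∧
      Fm.agents δ ⊆ Fm.agents ψ := by
  obtain ⟨Bs, hBs⟩ := (hDDT φ ψ).mp h
  obtain ⟨δ, h1, h2, hv, ha⟩ := hCIP _ _ hBs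
  refine ⟨δ, (hDDT φ δ).mpr ⟨Bs, h1⟩, ?_, ?_, fun x hx => (ha hx).2⟩
  · exact GCons.mp (GCons_weaken _ h2) (GCons.hyp rfl)
  · rw [vars_blockConj] at hv; exact hv
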